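/- (Lemma 5) Under Assumption 1, every element of 𝒦̂_𝒮 is a stabilizing distributed gain: if Z̃ and Q̃ are clique-block-diagonal with Q̃ ≻ 0 and there exists ρ ∈ ℝ with Φ(Q̃,Z̃) + ρ blkdiag(Q̃,Q̃) M blkdiag(Q̃,Q̃) ≻ 0, then K = (EᵀE)⁻¹Eᵀ Z̃ Q̃⁻¹ E satisfies K ∈ 𝒮 and the matrix P = EᵀQ̃⁻¹E satisfies P ∈ 𝒮, P ≻ 0, and (A+BK)ᵀP(A+BK) − P ≺ 0. -/

import Mathlib

open Matrix

/-- Block index set: `Idx dims` indexes the rows/columns of an `n × n` matrix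
partitioned into blocks of sizes `dims 0, …, dims (N-1)`. -/
abbrev Idx {N : ℕ} (dims : Fin N → ℕ) : Type := Σ i : Fin N, Fin (dims i)

/-- The sparsity set `𝒮`: the `(i,j)` block vanishes whenever `i ≠ j` and `(i,j) ∉ ℰ`. -/
def Sparse {N : ℕ} (Gr : SimpleGraph (Fin N)) (dims : Fin N → ℕ)
    (K : Matrix (Idx dims) (Idx dims) ℝ) : Prop :=
  ∀ i j : Fin N, i ≠ j → ¬ Gr.Adj i j →
    ∀ (a : Fin (dims i)) (b : Fin (dims j)), K ⟨i, a⟩ ⟨j, b⟩ = 0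

/-- Block-diagonal (w.r.t. the partition `dims`): off-diagonal blocks vanish. -/
def BlkDiag {N : ℕ} (dims : Fin N → ℕ) (K : Matrix (Idx dims) (Idx dims) ℝ) : Prop :=
  ∀ p r : Idx dims, p.1 ≠ r.1 → K p r = 0

/-- `X ≺ 0`: negative definiteness. -/
def NegDef {m : Type*} [Fintype m] (X : Matrix m m ℝ) : Prop := (-X).PosDef

/-- Row index set of the stacked clique selector matrix `E`. -/
abbrev CIdx {N q : ℕ} (dims : Fin N → ℕ) (C : Fin q → Finset (Fin N)) : Type :=
  Σ k : Fin q, Σ j : {x : Fin N // x ∈ C k}, Fin (dims j.1)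

/-- The stacked selector matrix `E = [E_{C_1}ᵀ, …, E_{C_q}ᵀ]ᵀ`. -/
def Emat {N q : ℕ} (dims : Fin N → ℕ) (C : Fin q → Finset (Fin N)) :
    Matrix (CIdx dims C) (Idx dims) ℝ :=
  fun p i => if (⟨p.2.1.1, p.2.2⟩ : Idx dims) = i then 1 else 0

/-- Clique-block-diagonal matrices `blkdiag(X_1, …, X_q)` with `X_k ∈ ℝ^{n_{C_k} × n_{C_k}}`. -/
def CliqueBlkDiag {N q : ℕ} (dims : Fin N → ℕ) (C : Fin q → Finset (Fin N))
    (X : Matrix (CIdx dims C) (CIdx dims C) ℝ) : Prop :=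
  ∀ p r : CIdx dims C, p.1 ≠ r.1 → X p r = 0

/-- `C_1, …, C_q` are cliques of the graph. -/
def IsCliques {N q : ℕ} (Gr : SimpleGraph (Fin N)) (C : Fin q → Finset (Fin N)) : Prop :=
  ∀ k : Fin q, ∀ i ∈ C k, ∀ j ∈ C k, i ≠ j → Gr.Adj i j

/-- Assumption 1: every node is covered, and two distinct nodes share a clique iff adjacent. -/
def Assumption1 {N q : ℕ} (Gr : SimpleGraph (Fin N)) (C : Fin q → Finset (Fin N)) : Prop :=
  (∀ i : Fin N, ∃ k, i ∈ C k) ∧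
    ∀ i j : Fin N, i ≠ j → ((∃ k, i ∈ C k ∧ j ∈ C k) ↔ Gr.Adj i j)

/-- `N₀ = I − E (EᵀE)⁻¹ Eᵀ`. -/
noncomputable def N0 {N q : ℕ} (dims : Fin N → ℕ) (C : Fin q → Finset (Fin N)) :
    Matrix (CIdx dims C) (CIdx dims C) ℝ :=
  1 - Emat dims C * ((Emat dims C)ᵀ * Emat dims C)⁻¹ * (Emat dims C)ᵀ

/-- `M = blkdiag(N₀, N₀)`. -/
noncomputable def Mmat {N q : ℕ} (dims : Fin N → ℕ) (C : Fin q → Finset (Fin N)) :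
    Matrix (CIdx dims C ⊕ CIdx dims C) (CIdx dims C ⊕ CIdx dims C) ℝ :=
  fromBlocks (N0 dims C) 0 0 (N0 dims C)

/-- Dilation `X̃ = E X (EᵀE)⁻¹ Eᵀ`. -/
noncomputable def tilde {N q : ℕ} (dims : Fin N → ℕ) (C : Fin q → Finset (Fin N))
    (X : Matrix (Idx dims) (Idx dims) ℝ) : Matrix (CIdx dims C) (CIdx dims C) ℝ :=
  Emat dims C * X * ((Emat dims C)ᵀ * Emat dims C)⁻¹ * (Emat dims C)ᵀ

/-- The gain `(EᵀE)⁻¹ Eᵀ Z̃ G̃⁻¹ E`. -/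
noncomputable def gainCl {N q : ℕ} (dims : Fin N → ℕ) (C : Fin q → Finset (Fin N))
    (Zt Gt : Matrix (CIdx dims C) (CIdx dims C) ℝ) : Matrix (Idx dims) (Idx dims) ℝ :=
  ((Emat dims C)ᵀ * Emat dims C)⁻¹ * (Emat dims C)ᵀ * Zt * Gt⁻¹ * Emat dims C

/-- `Φ(Q̃, Z̃) = [[Q̃, (ÃQ̃+B̃Z̃)ᵀ], [ÃQ̃+B̃Z̃, Q̃]]`. -/
noncomputable def Phi {N q : ℕ} (dims : Fin N → ℕ) (C : Fin q → Finset (Fin N))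
    (A B : Matrix (Idx dims) (Idx dims) ℝ)
    (Qt Zt : Matrix (CIdx dims C) (CIdx dims C) ℝ) :
    Matrix (CIdx dims C ⊕ CIdx dims C) (CIdx dims C ⊕ CIdx dims C) ℝ :=
  fromBlocks Qt (tilde dims C A * Qt + tilde dims C B * Zt)ᵀ
    (tilde dims C A * Qt + tilde dims C B * Zt) Qt

/-! If `W` is clique-block-diagonal, the `(i, j)` block of `Eᵀ W E` only collects entries of `W`
inside cliques containing both `i` and `j`, so it vanishes unless `i` and `j` are adjacent.
This gives the sparsity of `P = Eᵀ Q̃⁻¹ E` and, as `(EᵀE)⁻¹` is diagonal, of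
`K = (EᵀE)⁻¹ Eᵀ (Z̃ Q̃⁻¹) E`.

For stability, conjugate the LMI by `T = blkdiag(Q̃⁻¹E, Q̃⁻¹E)`, which is injective because `E` is.
Since `N₀ E = 0` the `ρ`-term disappears, and `(Q̃⁻¹E)ᵀ (ÃQ̃ + B̃Z̃) (Q̃⁻¹E) = P (A + BK)`, so
`[[P, (P(A+BK))ᵀ], [P(A+BK), P]] ≻ 0`. Testing this on `(v, -(A+BK) v)` leaves
`vᵀ (P - (A+BK)ᵀ P (A+BK)) v > 0`. -/

namespace Matrix

variable {m n : Type*} [Fintype m] [Fintype n]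

theorem IsDiag.inv [DecidableEq n] {α : Type*} [CommRing α] {A : Matrix n n α} (hA : A.IsDiag) :
    A⁻¹.IsDiag := by
  rw [← hA.diagonal_diag, inv_diagonal]
  exact isDiag_diagonal _

theorem PosDef.transpose_mul_mul_same {X : Matrix m m ℝ} (hX : X.PosDef) {T : Matrix m n ℝ}
    (hT : Function.Injective T.mulVec) : (Tᵀ * X * T).PosDef := by
  simpa only [conjTranspose_eq_transpose_of_trivial] using hX.conjTranspose_mul_mul_same hT

omit [Fintype m] in
theorem mulVec_injective_fromBlocks_zero_zero {m' n' R : Type*} [Fintype n'] [Semiring R]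
    {U : Matrix m n R} {V : Matrix m' n' R}
    (hU : Function.Injective U.mulVec) (hV : Function.Injective V.mulVec) :
    Function.Injective (fromBlocks U 0 0 V).mulVec := by
  intro x y hxy
  simp only [fromBlocks_mulVec, zero_mulVec, add_zero, zero_add, Sum.elim_eq_iff] at hxy
  rw [← Sum.elim_comp_inl_inr x, ← Sum.elim_comp_inl_inr y, hU hxy.1, hV hxy.2]

omit [Fintype n] in
theorem fromBlocks_diag_transpose_mul_mul {R : Type*} [CommSemiring R] (U : Matrix m n R)
    (A B C D : Matrix m m R) :
    (fromBlocks U 0 0 U)ᵀ * fromBlocks A B C D * fromBlocks U 0 0 U =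
      fromBlocks (Uᵀ * A * U) (Uᵀ * B * U) (Uᵀ * C * U) (Uᵀ * D * U) := by
  simp [fromBlocks_transpose, fromBlocks_multiply]

theorem PosDef.sub_transpose_mul_mul_of_fromBlocks [DecidableEq n] {P X : Matrix n n ℝ}
    (hP : P.IsSymm) (h : (fromBlocks P (P * X)ᵀ (P * X) P).PosDef) :
    (P - Xᵀ * P * X).PosDef := by
  have hS : Function.Injective (fromRows (1 : Matrix n n ℝ) (-X)).mulVec := fun v w hvw => by
    simpa [fromRows_mulVec, one_mulVec] using congrArg (fun u => u ∘ Sum.inl) hvw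
  convert h.transpose_mul_mul_same hS using 1
  simp only [transpose_fromRows, fromCols_mul_fromBlocks, fromCols_mul_fromRows,
    transpose_one, transpose_neg, transpose_mul, hP.eq]
  noncomm_ring

end Matrix

section CliqueDilation

variable {N q : ℕ} {dims : Fin N → ℕ} {C : Fin q → Finset (Fin N)}

theorem cliqueBlkDiag_iff_blockTriangular {X : Matrix (CIdx dims C) (CIdx dims C) ℝ} :
    CliqueBlkDiag dims C X ↔
      X.BlockTriangular Sigma.fst ∧ X.BlockTriangular (OrderDual.toDual ∘ Sigma.fst) :=
  ⟨fun h => ⟨fun _ _ hlt => h _ _ hlt.ne',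
      fun _ _ hlt => h _ _ (OrderDual.toDual_lt_toDual.mp hlt).ne⟩,
    fun h _ _ hne => hne.lt_or_gt.elim (fun hlt => h.2 hlt) (fun hlt => h.1 hlt)⟩

theorem CliqueBlkDiag.mul {X Y : Matrix (CIdx dims C) (CIdx dims C) ℝ}
    (hX : CliqueBlkDiag dims C X) (hY : CliqueBlkDiag dims C Y) : CliqueBlkDiag dims C (X * Y) :=
  let hX' := cliqueBlkDiag_iff_blockTriangular.mp hX
  let hY' := cliqueBlkDiag_iff_blockTriangular.mp hY
  cliqueBlkDiag_iff_blockTriangular.mpr ⟨hX'.1.mul hY'.1, hX'.2.mul hY'.2⟩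

theorem CliqueBlkDiag.inv {X : Matrix (CIdx dims C) (CIdx dims C) ℝ}
    (hX : CliqueBlkDiag dims C X) : CliqueBlkDiag dims C X⁻¹ := by
  by_cases hdet : IsUnit X.det
  · have := X.invertibleOfIsUnitDet hdet
    obtain ⟨h₁, h₂⟩ := cliqueBlkDiag_iff_blockTriangular.mp hX
    exact cliqueBlkDiag_iff_blockTriangular.mpr
      ⟨blockTriangular_inv_of_blockTriangular h₁, blockTriangular_inv_of_blockTriangular h₂⟩
  · rw [nonsing_inv_apply_not_isUnit X hdet]
    exact fun _ _ _ => rfl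

theorem Emat_apply_eq_zero_of_notMem {c : CIdx dims C} {x : Idx dims} (hx : x.1 ∉ C c.1) :
    Emat dims C c x = 0 :=
  if_neg fun h : (⟨c.2.1.1, c.2.2⟩ : Idx dims) = x => hx (h ▸ c.2.1.2)

theorem Emat_mulVec_apply (v : Idx dims → ℝ) (c : CIdx dims C) :
    (Emat dims C *ᵥ v) c = v ⟨c.2.1.1, c.2.2⟩ := by
  simp [mulVec, dotProduct, Emat]

theorem Emat_mulVec_injective (hcov : ∀ i, ∃ k, i ∈ C k) :
    Function.Injective (Emat dims C).mulVec := by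
  intro v w hvw
  funext ⟨i, a⟩
  obtain ⟨k, hk⟩ := hcov i
  simpa only [Emat_mulVec_apply] using congrFun hvw ⟨k, ⟨i, hk⟩, a⟩

theorem isDiag_Emat_transpose_mul_Emat : ((Emat dims C)ᵀ * Emat dims C).IsDiag := by
  intro x y hxy
  refine Finset.sum_eq_zero fun c _ => ?_
  simp only [transpose_apply, Emat]
  split_ifs with hx hy
  exacts [absurd (hx.symm.trans hy) hxy, mul_zero 1, zero_mul _, zero_mul _]

theorem sparse_Emat_transpose_mul_mul_Emat {Gr : SimpleGraph (Fin N)} (hclq : IsCliques Gr C)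
    {W : Matrix (CIdx dims C) (CIdx dims C) ℝ} (hW : CliqueBlkDiag dims C W) :
    Sparse Gr dims ((Emat dims C)ᵀ * W * Emat dims C) := by
  intro i j hij hadj a b
  rw [mul_apply]
  refine Finset.sum_eq_zero fun c' _ => ?_
  by_cases hj : j ∈ C c'.1
  · rw [mul_apply, Finset.sum_mul]
    refine Finset.sum_eq_zero fun c _ => ?_
    by_cases hi : i ∈ C c.1
    · have hcc : c.1 ≠ c'.1 := fun hcc => hadj (hclq c'.1 i (hcc ▸ hi) j hj hij)
      rw [hW c c' hcc, mul_zero, zero_mul]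
    · rw [transpose_apply, Emat_apply_eq_zero_of_notMem hi, zero_mul, zero_mul]
  · rw [Emat_apply_eq_zero_of_notMem hj, mul_zero]

theorem Sparse.isDiag_mul {Gr : SimpleGraph (Fin N)} {D K : Matrix (Idx dims) (Idx dims) ℝ}
    (hK : Sparse Gr dims K) (hD : D.IsDiag) : Sparse Gr dims (D * K) := by
  intro i j hij hadj a b
  rw [← hD.diagonal_diag, diagonal_mul, hK i j hij hadj a b, mul_zero]

theorem sparse_gainCl {Gr : SimpleGraph (Fin N)} (hclq : IsCliques Gr C)
    {Zt Qt : Matrix (CIdx dims C) (CIdx dims C) ℝ}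
    (hZt : CliqueBlkDiag dims C Zt) (hQt : CliqueBlkDiag dims C Qt) :
    Sparse Gr dims (gainCl dims C Zt Qt) := by
  have hK : gainCl dims C Zt Qt =
      ((Emat dims C)ᵀ * Emat dims C)⁻¹ * ((Emat dims C)ᵀ * (Zt * Qt⁻¹) * Emat dims C) := by
    simp only [gainCl, Matrix.mul_assoc]
  rw [hK]
  exact (sparse_Emat_transpose_mul_mul_Emat hclq (hZt.mul hQt.inv)).isDiag_mul
    isDiag_Emat_transpose_mul_Emat.inv

theorem posDef_Emat_transpose_mul_Emat (hcov : ∀ i, ∃ k, i ∈ C k) :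
    ((Emat dims C)ᵀ * Emat dims C).PosDef := by
  simpa using PosDef.one.transpose_mul_mul_same (Emat_mulVec_injective hcov)

theorem Emat_transpose_mul_Emat_inv_mul (hcov : ∀ i, ∃ k, i ∈ C k) :
    ((Emat dims C)ᵀ * Emat dims C)⁻¹ * ((Emat dims C)ᵀ * Emat dims C) = 1 :=
  nonsing_inv_mul _ (posDef_Emat_transpose_mul_Emat hcov).det_pos.ne'.isUnit

theorem N0_mul_Emat (hcov : ∀ i, ∃ k, i ∈ C k) : N0 dims C * Emat dims C = 0 := by
  rw [N0, Matrix.sub_mul, Matrix.one_mul, Matrix.mul_assoc, Matrix.mul_assoc,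
    Emat_transpose_mul_Emat_inv_mul hcov, Matrix.mul_one, sub_self]

variable {Qt : Matrix (CIdx dims C) (CIdx dims C) ℝ}

theorem mulVec_injective_inv_mul_Emat (hcov : ∀ i, ∃ k, i ∈ C k) (hQt : Qt.PosDef) :
    Function.Injective (Qt⁻¹ * Emat dims C).mulVec := by
  have hcomp : (Qt⁻¹ * Emat dims C).mulVec = Qt⁻¹.mulVec ∘ (Emat dims C).mulVec :=
    funext fun v => (mulVec_mulVec v _ _).symm
  rw [hcomp]
  exact (mulVec_injective_of_isUnit hQt.inv.isUnit).comp (Emat_mulVec_injective hcov)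

theorem transpose_mul_dilation_mul (hcov : ∀ i, ∃ k, i ∈ C k) (hQt : Qt.PosDef)
    (A B : Matrix (Idx dims) (Idx dims) ℝ) (Zt : Matrix (CIdx dims C) (CIdx dims C) ℝ) :
    (Qt⁻¹ * Emat dims C)ᵀ * (tilde dims C A * Qt + tilde dims C B * Zt) * (Qt⁻¹ * Emat dims C) =
      (Emat dims C)ᵀ * Qt⁻¹ * Emat dims C * (A + B * gainCl dims C Zt Qt) := by
  simp only [tilde, gainCl, transpose_mul, (isHermitian_iff_isSymm.mp hQt.inv.1).eq,
    Matrix.add_mul, Matrix.mul_add, Matrix.mul_assoc,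
    mul_nonsing_inv_cancel_left Qt _ hQt.det_pos.ne'.isUnit,
    Emat_transpose_mul_Emat_inv_mul hcov, Matrix.mul_one]

theorem fromBlocks_mul_Mmat_mul_fromBlocks_mul (hcov : ∀ i, ∃ k, i ∈ C k) (hQt : Qt.PosDef) :
    fromBlocks Qt 0 0 Qt * Mmat dims C * fromBlocks Qt 0 0 Qt *
      fromBlocks (Qt⁻¹ * Emat dims C) 0 0 (Qt⁻¹ * Emat dims C) = 0 := by
  simp [Mmat, Matrix.mul_assoc, fromBlocks_multiply,
    mul_nonsing_inv_cancel_left Qt _ hQt.det_pos.ne'.isUnit, N0_mul_Emat hcov]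

theorem congruence_lmi_eq_fromBlocks (hcov : ∀ i, ∃ k, i ∈ C k) (hQt : Qt.PosDef)
    (A B : Matrix (Idx dims) (Idx dims) ℝ) (Zt : Matrix (CIdx dims C) (CIdx dims C) ℝ) (ρ : ℝ) :
    (fromBlocks (Qt⁻¹ * Emat dims C) 0 0 (Qt⁻¹ * Emat dims C))ᵀ *
        (Phi dims C A B Qt Zt +
          ρ • ((fromBlocks Qt 0 0 Qt) * Mmat dims C * (fromBlocks Qt 0 0 Qt))) *
        fromBlocks (Qt⁻¹ * Emat dims C) 0 0 (Qt⁻¹ * Emat dims C) =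
      fromBlocks ((Emat dims C)ᵀ * Qt⁻¹ * Emat dims C)
        ((Emat dims C)ᵀ * Qt⁻¹ * Emat dims C * (A + B * gainCl dims C Zt Qt))ᵀ
        ((Emat dims C)ᵀ * Qt⁻¹ * Emat dims C * (A + B * gainCl dims C Zt Qt))
        ((Emat dims C)ᵀ * Qt⁻¹ * Emat dims C) := by
  have hQ : (Qt⁻¹ * Emat dims C)ᵀ * Qt * (Qt⁻¹ * Emat dims C) =
      (Emat dims C)ᵀ * Qt⁻¹ * Emat dims C := by
    rw [transpose_mul, (isHermitian_iff_isSymm.mp hQt.inv.1).eq, Matrix.mul_assoc _ Qt,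
      mul_nonsing_inv_cancel_left Qt _ hQt.det_pos.ne'.isUnit]
  rw [Matrix.mul_add, Matrix.add_mul, Matrix.mul_smul, Matrix.smul_mul,
    Matrix.mul_assoc _ (_ * _ * _), fromBlocks_mul_Mmat_mul_fromBlocks_mul hcov hQt,
    Matrix.mul_zero, smul_zero, add_zero, Phi,
    fromBlocks_diag_transpose_mul_mul, hQ, ← transpose_mul_dilation_mul hcov hQt A B Zt]
  simp only [transpose_mul, transpose_transpose, Matrix.mul_assoc]

end CliqueDilation

/-- Lemma 5: every element of `𝒦̂_𝒮` is a stabilizing distributed gain. -/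
theorem stmt8 {N q : ℕ} (Gr : SimpleGraph (Fin N)) (dims : Fin N → ℕ)
    (C : Fin q → Finset (Fin N)) (hclq : IsCliques Gr C) (hass : Assumption1 Gr C)
    (A B : Matrix (Idx dims) (Idx dims) ℝ)
    (Zt Qt : Matrix (CIdx dims C) (CIdx dims C) ℝ)
    (hZt : CliqueBlkDiag dims C Zt) (hQt : CliqueBlkDiag dims C Qt) (hQpd : Qt.PosDef)
    (ρ : ℝ)
    (h : (Phi dims C A B Qt Zt +
        ρ • ((fromBlocks Qt 0 0 Qt) * Mmat dims C * (fromBlocks Qt 0 0 Qt))).PosDef) :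
    Sparse Gr dims (gainCl dims C Zt Qt) ∧
    Sparse Gr dims ((Emat dims C)ᵀ * Qt⁻¹ * Emat dims C) ∧
    ((Emat dims C)ᵀ * Qt⁻¹ * Emat dims C).PosDef ∧
    NegDef ((A + B * gainCl dims C Zt Qt)ᵀ * ((Emat dims C)ᵀ * Qt⁻¹ * Emat dims C) *
      (A + B * gainCl dims C Zt Qt) - (Emat dims C)ᵀ * Qt⁻¹ * Emat dims C) := by
  have hP : ((Emat dims C)ᵀ * Qt⁻¹ * Emat dims C).PosDef :=
    hQpd.inv.transpose_mul_mul_same (Emat_mulVec_injective hass.1)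
  refine ⟨sparse_gainCl hclq hZt hQt, sparse_Emat_transpose_mul_mul_Emat hclq hQt.inv, hP, ?_⟩
  have hU := mulVec_injective_inv_mul_Emat hass.1 hQpd
  have hblock := h.transpose_mul_mul_same (mulVec_injective_fromBlocks_zero_zero hU hU)
  rw [congruence_lmi_eq_fromBlocks hass.1 hQpd] at hblock
  rw [NegDef, neg_sub]
  exact PosDef.sub_transpose_mul_mul_of_fromBlocks (isHermitian_iff_isSymm.mp hP.1) hblock
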